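/- arXiv:1706.06006 — 6 statements merged into one kernel-verified Lean document; each statement's English description precedes it below -/
import Mathlib

section
/- If an aggregator X is σ(X₁,...,X_N)-measurable, calibrated (E[Y|X] = X a.s.), and extremizing (Var(E[Y | X_j, j ∈ v]) ≤ Var(X) for all subsets v, in particular for v = {1,...,N}), then X = E[Y | X₁, ..., X_N] almost surely. -/
/-!
By the tower property, calibration says that `𝒳 = E[Z | 𝒳]` for the efficient aggregator
`Z = E[Y | X₁, …, X_N]`. The law of total variance then gives
`E[(Z - 𝒳)²] = E[Var[Z | 𝒳]] = Var Z - Var 𝒳`, which is `≤ 0` by the extremizing property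
at `v = {1, …, N}`, so `Z = 𝒳` almost surely.
-/

open MeasureTheory ProbabilityTheory

namespace ProbabilityTheory

variable {Ω : Type*} {m m₀ : MeasurableSpace Ω} {μ : Measure[m₀] Ω} [IsProbabilityMeasure μ]
  {X : Ω → ℝ}

lemma integral_sq_sub_condExp_eq_variance_sub (hm : m ≤ m₀) (hX : MemLp X 2 μ) :
    ∫ ω, (X ω - μ[X | m] ω) ^ 2 ∂μ = Var[X; μ] - Var[μ[X | m]; μ] := by
  rw [← integral_condVar_add_variance_condExp hm hX, condVar, integral_condExp hm]
  simp only [Pi.sub_apply, Pi.pow_apply, add_sub_cancel_right]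

lemma ae_eq_condExp_of_variance_le (hm : m ≤ m₀) (hX : MemLp X 2 μ)
    (hvar : Var[X; μ] ≤ Var[μ[X | m]; μ]) : X =ᵐ[μ] μ[X | m] := by
  have hsq : ∫ ω, (X ω - μ[X | m] ω) ^ 2 ∂μ = 0 :=
    le_antisymm (by linarith [integral_sq_sub_condExp_eq_variance_sub hm hX])
      (integral_nonneg fun ω => sq_nonneg _)
  have hint : Integrable (fun ω => (X ω - μ[X | m] ω) ^ 2) μ :=
    (hX.sub (hX.condExp one_le_two)).integrable_sq
  filter_upwards [(integral_eq_zero_iff_of_nonneg (fun ω => sq_nonneg _) hint).mp hsq]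
    with ω hω
  exact sub_eq_zero.mp (pow_eq_zero_iff two_ne_zero |>.mp hω)

end ProbabilityTheory

theorem calibrated_extremizing_eq_efficient_general
    {Ω : Type*} [m : MeasurableSpace Ω] (μ : Measure Ω) [IsProbabilityMeasure μ]
    {N : ℕ} (Y : Ω → ℝ) (X : Fin N → Ω → ℝ) (𝒳 : Ω → ℝ)
    (hY : MemLp Y 2 μ)
    (hGm : (⨆ j, MeasurableSpace.comap (X j) Real.measurableSpace) ≤ m)
    (hmeas : Measurable[⨆ j, MeasurableSpace.comap (X j) Real.measurableSpace] 𝒳)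
    (hcal : μ[Y | MeasurableSpace.comap 𝒳 Real.measurableSpace] =ᵐ[μ] 𝒳)
    (hext : ∀ v : Finset (Fin N),
      variance (μ[Y | ⨆ j ∈ v, MeasurableSpace.comap (X j) Real.measurableSpace]) μ
        ≤ variance 𝒳 μ) :
    𝒳 =ᵐ[μ] μ[Y | ⨆ j, MeasurableSpace.comap (X j) Real.measurableSpace] := by
  set G := ⨆ j, MeasurableSpace.comap (X j) Real.measurableSpace
  set σ𝒳 := MeasurableSpace.comap 𝒳 Real.measurableSpace
  have hσ𝒳G : σ𝒳 ≤ G := hmeas.comap_le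
  have htower : μ[μ[Y | G] | σ𝒳] =ᵐ[μ] 𝒳 := (condExp_condExp_of_le hσ𝒳G hGm).trans hcal
  have hvar : Var[μ[Y | G]; μ] ≤ Var[μ[μ[Y | G] | σ𝒳]; μ] := by
    rw [variance_congr htower]
    simpa [G] using hext Finset.univ
  exact htower.symm.trans
    (ae_eq_condExp_of_variance_le (hσ𝒳G.trans hGm) (hY.condExp one_le_two) hvar).symm

/-- If an aggregator `X` is `σ(X₁,...,X_N)`-measurable, calibrated, and extremizing,
then `X = E[Y | X₁, ..., X_N]` almost surely. -/
theorem calibrated_extremizing_eq_efficient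
    {Ω : Type*} [m : MeasurableSpace Ω] (μ : Measure Ω) [IsProbabilityMeasure μ]
    {N : ℕ} (Y : Ω → ℝ) (X : Fin N → Ω → ℝ) (𝒳 : Ω → ℝ)
    (hY : MemLp Y 2 μ) (h𝒳 : MemLp 𝒳 2 μ)
    (hGm : (⨆ j, MeasurableSpace.comap (X j) Real.measurableSpace) ≤ m)
    (hmeas : Measurable[⨆ j, MeasurableSpace.comap (X j) Real.measurableSpace] 𝒳)
    (hcal : μ[Y | MeasurableSpace.comap 𝒳 Real.measurableSpace] =ᵐ[μ] 𝒳)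
    (hext : ∀ v : Finset (Fin N),
      variance (μ[Y | ⨆ j ∈ v, MeasurableSpace.comap (X j) Real.measurableSpace]) μ
        ≤ variance 𝒳 μ) :
    𝒳 =ᵐ[μ] μ[Y | ⨆ j, MeasurableSpace.comap (X j) Real.measurableSpace] :=
  calibrated_extremizing_eq_efficient_general (m := m) μ Y X 𝒳 hY hGm hmeas hcal hext
end

section
/- Let X₁, ..., X_N be calibrated predictions of Y and X_w = Σ w_j X_j with fixed nonnegative weights summing to 1. Then E[(Y − X_w)²] = (E[Y²] − E[X_w²]) − Σᵢ Σⱼ wᵢ wⱼ E[(Xᵢ − Xⱼ)²]. -/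
/-!
In `L²(μ)` a calibrated prediction `Xⱼ = E[Y | σ(Xⱼ)]` is the orthogonal projection of `Y` onto
the `σ(Xⱼ)`-measurable subspace, so `⟪Y, Xⱼ⟫ = ‖Xⱼ‖²`. Given this, the identity is Hilbert-space
algebra: expand `‖Y - X_w‖²`, and use that for weights summing to one the pairwise spread
`∑ᵢ ∑ⱼ wᵢ wⱼ ‖Xᵢ - Xⱼ‖²` equals `2 (∑ⱼ wⱼ ‖Xⱼ‖² - ‖X_w‖²)`.
-/

open MeasureTheory Finset

section WeightedMean

variable {E : Type*} [NormedAddCommGroup E] [InnerProductSpace ℝ E] {ι : Type*} [Fintype ι]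

theorem sum_sum_mul_norm_sub_sq (x : ι → E) (w : ι → ℝ) (hw : ∑ j, w j = 1) :
    ∑ i, ∑ j, w i * w j * ‖x i - x j‖ ^ 2
      = 2 * (∑ j, w j * ‖x j‖ ^ 2 - ‖∑ j, w j • x j‖ ^ 2) := by
  have hz : ‖∑ j, w j • x j‖ ^ 2 = ∑ i, ∑ j, w i * w j * inner ℝ (x i) (x j) := by
    simp only [← real_inner_self_eq_norm_sq, sum_inner, inner_sum, real_inner_smul_left,
      real_inner_smul_right]
    exact sum_congr rfl fun i _ => sum_congr rfl fun j _ => by rw [real_inner_comm]; ring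
  simp only [hz, norm_sub_sq_real, mul_add, mul_sub, sum_add_distrib, sum_sub_distrib, mul_assoc,
    ← mul_sum, ← sum_mul, hw, one_mul]
  simp only [mul_left_comm _ (2 : ℝ), ← mul_sum]
  ring

theorem norm_sub_sum_smul_sq_of_inner_eq (y : E) (x : ι → E) (w : ι → ℝ) (hw : ∑ j, w j = 1)
    (hcal : ∀ j, inner ℝ y (x j) = ‖x j‖ ^ 2) :
    ‖y - ∑ j, w j • x j‖ ^ 2
      = (‖y‖ ^ 2 - ‖∑ j, w j • x j‖ ^ 2) - ∑ i, ∑ j, w i * w j * ‖x i - x j‖ ^ 2 := by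
  have hyz : inner ℝ y (∑ j, w j • x j) = ∑ j, w j * ‖x j‖ ^ 2 := by
    simp only [inner_sum, real_inner_smul_right, hcal]
  rw [sum_sum_mul_norm_sub_sq x w hw, norm_sub_sq_real, hyz]
  ring

end WeightedMean

theorem MeasureTheory.Lp.coeFn_finset_sum {α E ι : Type*} [MeasurableSpace α]
    [NormedAddCommGroup E] {p : ENNReal} {μ : Measure α} (s : Finset ι) (f : ι → Lp E p μ) :
    ⇑(∑ i ∈ s, f i) =ᵐ[μ] ∑ i ∈ s, ⇑(f i) := by
  classical
  induction s using Finset.induction_on with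
  | empty => simpa using Lp.coeFn_zero E p μ
  | insert i s hi ih =>
    simp only [sum_insert hi]
    exact (Lp.coeFn_add _ _).trans (Filter.EventuallyEq.rfl.add ih)

section L2

variable {Ω : Type*} [MeasurableSpace Ω] {μ : Measure Ω}

theorem integral_mul_eq_inner_of_ae_eq {f g : Lp ℝ 2 μ} {F G : Ω → ℝ} (hF : F =ᵐ[μ] f)
    (hG : G =ᵐ[μ] g) : ∫ ω, F ω * G ω ∂μ = inner ℝ f g := by
  rw [L2.inner_def]
  refine integral_congr_ae ?_
  filter_upwards [hF, hG] with ω hFω hGω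
  simp [hFω, hGω, mul_comm]

theorem integral_sq_eq_norm_sq_of_ae_eq {f : Lp ℝ 2 μ} {F : Ω → ℝ} (hF : F =ᵐ[μ] f) :
    ∫ ω, F ω ^ 2 ∂μ = ‖f‖ ^ 2 := by
  simpa [sq, real_inner_self_eq_norm_sq] using integral_mul_eq_inner_of_ae_eq hF hF

end L2

section CondExp

variable {Ω : Type*} {m m₀ : MeasurableSpace Ω} {μ : Measure Ω}

theorem inner_condExpL2_self (hm : m ≤ m₀) (f : Lp ℝ 2 μ) :
    inner ℝ f (condExpL2 ℝ ℝ hm f : Lp ℝ 2 μ) = ‖(condExpL2 ℝ ℝ hm f : Lp ℝ 2 μ)‖ ^ 2 := by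
  rw [← real_inner_self_eq_norm_sq,
    inner_condExpL2_eq_inner_fun hm f _ (aestronglyMeasurable_condExpL2 hm f)]

theorem MeasureTheory.MemLp.toLp_eq_condExpL2_of_ae_eq_condExp [IsFiniteMeasure μ] (hm : m ≤ m₀)
    {X Y : Ω → ℝ} (hX : MemLp X 2 μ) (hY : MemLp Y 2 μ) (hXY : X =ᵐ[μ] μ[Y | m]) :
    hX.toLp X = condExpL2 ℝ ℝ hm (hY.toLp Y) :=
  Lp.ext (hX.coeFn_toLp.trans (hXY.trans (hY.condExpL2_ae_eq_condExp hm).symm))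

end CondExp

theorem squared_error_weighted_mean_general
    {Ω : Type*} [m : MeasurableSpace Ω] (μ : Measure Ω) [IsProbabilityMeasure μ]
    {N : ℕ} (Y : Ω → ℝ) (X : Fin N → Ω → ℝ) (w : Fin N → ℝ)
    (hY : MemLp Y 2 μ) (hX : ∀ j, MemLp (X j) 2 μ)
    (hw1 : ∑ j, w j = 1)
    (hle : ∀ j, MeasurableSpace.comap (X j) Real.measurableSpace ≤ m)
    (hcal : ∀ j, X j =ᵐ[μ] μ[Y | MeasurableSpace.comap (X j) Real.measurableSpace]) :
    ∫ ω, (Y ω - ∑ j, w j * X j ω) ^ 2 ∂μ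
      = (∫ ω, Y ω ^ 2 ∂μ - ∫ ω, (∑ j, w j * X j ω) ^ 2 ∂μ)
        - ∑ i, ∑ j, w i * w j * ∫ ω, (X i ω - X j ω) ^ 2 ∂μ := by
  set y := hY.toLp Y
  set x : Fin N → Lp ℝ 2 μ := fun j => (hX j).toLp (X j)
  have hy : Y =ᵐ[μ] y := hY.coeFn_toLp.symm
  have hx : ∀ᵐ ω ∂μ, ∀ j, X j ω = x j ω := ae_all_iff.2 fun j => (hX j).coeFn_toLp.symm
  have hz : (fun ω => ∑ j, w j * X j ω) =ᵐ[μ] ⇑(∑ j, w j • x j) := by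
    filter_upwards [Lp.coeFn_finset_sum univ (fun j => w j • x j),
      ae_all_iff.2 fun j => Lp.coeFn_smul (w j) (x j), hx] with ω hsum hsmul hxω
    rw [hsum, Finset.sum_apply]
    simp only [hsmul, hxω, Pi.smul_apply, smul_eq_mul]
  have hyz : (fun ω => Y ω - ∑ j, w j * X j ω) =ᵐ[μ] ⇑(y - ∑ j, w j • x j) := by
    filter_upwards [hy, hz, Lp.coeFn_sub y (∑ j, w j • x j)] with ω hyω hzω hsub
    rw [hsub, Pi.sub_apply, ← hyω, ← hzω]
  have hxx : ∀ i j, ∫ ω, (X i ω - X j ω) ^ 2 ∂μ = ‖x i - x j‖ ^ 2 := fun i j =>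
    integral_sq_eq_norm_sq_of_ae_eq <| by
      filter_upwards [hx, Lp.coeFn_sub (x i) (x j)] with ω hxω hsub
      rw [hsub, Pi.sub_apply, ← hxω, ← hxω]
  have hinner : ∀ j, inner ℝ y (x j) = ‖x j‖ ^ 2 := fun j => by
    rw [show x j = _ from (hX j).toLp_eq_condExpL2_of_ae_eq_condExp (hle j) hY (hcal j)]
    exact inner_condExpL2_self (hle j) y
  simp only [integral_sq_eq_norm_sq_of_ae_eq hyz, integral_sq_eq_norm_sq_of_ae_eq hy,
    integral_sq_eq_norm_sq_of_ae_eq hz, hxx]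
  exact norm_sub_sum_smul_sq_of_inner_eq y x w hw1 hinner

/-- For calibrated predictions `X₁,...,X_N` of `Y` and a weighted arithmetic mean
`X_w = Σ wⱼ Xⱼ` with fixed nonnegative weights summing to one,
`E[(Y − X_w)²] = (E[Y²] − E[X_w²]) − Σᵢ Σⱼ wᵢ wⱼ E[(Xᵢ − Xⱼ)²]`. -/
theorem squared_error_weighted_mean
    {Ω : Type*} [m : MeasurableSpace Ω] (μ : Measure Ω) [IsProbabilityMeasure μ]
    {N : ℕ} (Y : Ω → ℝ) (X : Fin N → Ω → ℝ) (w : Fin N → ℝ)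
    (hY : MemLp Y 2 μ) (hX : ∀ j, MemLp (X j) 2 μ)
    (hw : ∀ j, 0 ≤ w j) (hw1 : ∑ j, w j = 1)
    (hle : ∀ j, MeasurableSpace.comap (X j) Real.measurableSpace ≤ m)
    (hcal : ∀ j, X j =ᵐ[μ] μ[Y | MeasurableSpace.comap (X j) Real.measurableSpace]) :
    ∫ ω, (Y ω - ∑ j, w j * X j ω) ^ 2 ∂μ
      = (∫ ω, Y ω ^ 2 ∂μ - ∫ ω, (∑ j, w j * X j ω) ^ 2 ∂μ)
        - ∑ i, ∑ j, w i * w j * ∫ ω, (X i ω - X j ω) ^ 2 ∂μ :=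
  squared_error_weighted_mean_general (m := m) μ Y X w hY hX hw1 hle hcal
end

section
/- A non-trivial weighted arithmetic mean X_w = Σ w_j X_j of calibrated predictions is not calibrated: P(E[Y | X_w] ≠ X_w) > 0. -/
/-!
If `f` is calibrated for `Y`, pulling `f` out of `E[f Y | σ(f)]` gives `E[f Y] = E[f²]`.
Were `X_w` calibrated, then `E[X_w²] = E[X_w Y] = Σ wⱼ E[Xⱼ Y] = Σ wⱼ E[Xⱼ²]`, so the weighted
dispersion `Σ wⱼ (Xⱼ - X_w)²`, whose mean is `Σ wⱼ E[Xⱼ²] - E[X_w²]`, would have mean zero.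
But it is nonnegative and strictly positive wherever `Xᵢ ≠ Xⱼ`, an event of positive probability.
-/

open MeasureTheory ProbabilityTheory

section WeightedDispersion

variable {ι : Type*} {s : Finset ι} {w x : ι → ℝ}

theorem Finset.sum_mul_sub_weighted_sum_sq (hw : ∑ i ∈ s, w i = 1) :
    ∑ i ∈ s, w i * (x i - ∑ j ∈ s, w j * x j) ^ 2
      = ∑ i ∈ s, w i * x i ^ 2 - (∑ j ∈ s, w j * x j) ^ 2 := by
  set c := ∑ j ∈ s, w j * x j
  have expand : ∀ i, w i * (x i - c) ^ 2 = w i * x i ^ 2 - 2 * c * (w i * x i) + c ^ 2 * w i :=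
    fun i => by ring
  simp only [expand, Finset.sum_add_distrib, Finset.sum_sub_distrib, ← Finset.mul_sum, hw]
  ring

theorem Finset.sum_mul_sub_sq_pos (hw : ∀ k ∈ s, 0 ≤ w k) {i j : ι} (hi : i ∈ s) (hj : j ∈ s)
    (hwi : 0 < w i) (hwj : 0 < w j) (hx : x i ≠ x j) (c : ℝ) :
    0 < ∑ k ∈ s, w k * (x k - c) ^ 2 := by
  obtain ⟨k, hk, hwk, hxk⟩ : ∃ k ∈ s, 0 < w k ∧ x k ≠ c := by
    by_cases hic : x i = c
    · exact ⟨j, hj, hwj, fun hjc => hx (hic.trans hjc.symm)⟩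
    · exact ⟨i, hi, hwi, hic⟩
  exact (mul_pos hwk (sq_pos_of_ne_zero (sub_ne_zero.2 hxk))).trans_le <|
    Finset.single_le_sum (f := fun k => w k * (x k - c) ^ 2)
      (fun l hl => mul_nonneg (hw l hl) (sq_nonneg _)) hk

end WeightedDispersion

section Calibration

variable {Ω : Type*} {m m₀ : MeasurableSpace Ω} {μ : Measure Ω} [IsFiniteMeasure μ]

theorem integral_mul_eq_integral_sq_of_ae_eq_condExp (hm : m ≤ m₀) {f Y : Ω → ℝ}
    (hf : StronglyMeasurable[m] f) (hfY : Integrable (f * Y) μ) (hY : Integrable Y μ)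
    (hcal : f =ᵐ[μ] μ[Y | m]) :
    ∫ ω, f ω * Y ω ∂μ = ∫ ω, f ω ^ 2 ∂μ :=
  calc ∫ ω, f ω * Y ω ∂μ = ∫ ω, (μ[f * Y | m]) ω ∂μ := (integral_condExp hm).symm
    _ = ∫ ω, f ω * (μ[Y | m]) ω ∂μ :=
      integral_congr_ae (condExp_mul_of_stronglyMeasurable_left hf hfY hY)
    _ = ∫ ω, f ω ^ 2 ∂μ := integral_congr_ae <| hcal.mono fun ω hω => by simp [← hω, sq]

theorem integral_mul_eq_integral_sq_of_calibrated {f Y : Ω → ℝ}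
    (hle : MeasurableSpace.comap f Real.measurableSpace ≤ m₀)
    (hf : MemLp f 2 μ) (hY : MemLp Y 2 μ)
    (hcal : f =ᵐ[μ] μ[Y | MeasurableSpace.comap f Real.measurableSpace]) :
    ∫ ω, f ω * Y ω ∂μ = ∫ ω, f ω ^ 2 ∂μ :=
  integral_mul_eq_integral_sq_of_ae_eq_condExp hle (comap_measurable f).stronglyMeasurable
    (hf.integrable_mul hY) (hY.integrable one_le_two) hcal

end Calibration

section WeightedMean

variable {Ω ι : Type*} [MeasurableSpace Ω] {μ : Measure Ω} {s : Finset ι} {w : ι → ℝ}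
  {X : ι → Ω → ℝ}

theorem integral_weighted_sum_mul {Y : Ω → ℝ}
    (hXY : ∀ i ∈ s, Integrable (fun ω => X i ω * Y ω) μ) :
    ∫ ω, (∑ i ∈ s, w i * X i ω) * Y ω ∂μ = ∑ i ∈ s, w i * ∫ ω, X i ω * Y ω ∂μ := by
  simp only [Finset.sum_mul, mul_assoc]
  rw [integral_finsetSum s fun i hi => (hXY i hi).const_mul (w i)]
  simp only [integral_const_mul]

theorem integral_sum_mul_sub_weighted_sum_sq (hX : ∀ i ∈ s, MemLp (X i) 2 μ)
    (hw : ∑ i ∈ s, w i = 1) :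
    ∫ ω, ∑ i ∈ s, w i * (X i ω - ∑ j ∈ s, w j * X j ω) ^ 2 ∂μ
      = ∑ i ∈ s, w i * ∫ ω, X i ω ^ 2 ∂μ - ∫ ω, (∑ j ∈ s, w j * X j ω) ^ 2 ∂μ := by
  have hmean : MemLp (fun ω => ∑ j ∈ s, w j * X j ω) 2 μ :=
    memLp_finsetSum s fun j hj => (hX j hj).const_mul (w j)
  have hsq : ∀ i ∈ s, Integrable (fun ω => w i * X i ω ^ 2) μ :=
    fun i hi => (hX i hi).integrable_sq.const_mul (w i)
  simp only [Finset.sum_mul_sub_weighted_sum_sq hw]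
  rw [integral_sub (integrable_finsetSum s hsq) hmean.integrable_sq, integral_finsetSum s hsq]
  simp only [integral_const_mul]

theorem integral_sum_mul_sub_sq_pos (hX : ∀ k ∈ s, MemLp (X k) 2 μ) {c : Ω → ℝ}
    (hc : MemLp c 2 μ) (hw : ∀ k ∈ s, 0 ≤ w k) {i j : ι} (hi : i ∈ s) (hj : j ∈ s)
    (hwi : 0 < w i) (hwj : 0 < w j) (hXij : 0 < μ {ω | X i ω ≠ X j ω}) :
    0 < ∫ ω, ∑ k ∈ s, w k * (X k ω - c ω) ^ 2 ∂μ := by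
  have hnonneg : 0 ≤ fun ω => ∑ k ∈ s, w k * (X k ω - c ω) ^ 2 :=
    fun ω => Finset.sum_nonneg fun k hk => mul_nonneg (hw k hk) (sq_nonneg _)
  have hint : Integrable (fun ω => ∑ k ∈ s, w k * (X k ω - c ω) ^ 2) μ :=
    integrable_finsetSum s fun k hk => ((hX k hk).sub hc).integrable_sq.const_mul (w k)
  refine (integral_pos_iff_support_of_nonneg hnonneg hint).2
    (hXij.trans_le (measure_mono fun ω hω => ?_))
  exact (Finset.sum_mul_sub_sq_pos hw hi hj hwi hwj (x := fun k => X k ω) hω (c ω)).ne'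

end WeightedMean

/-- A non-trivial weighted arithmetic mean `X_w = Σ wⱼ Xⱼ` of calibrated predictions
is not calibrated: `P(E[Y | X_w] ≠ X_w) > 0`. -/
theorem weighted_mean_not_calibrated
    {Ω : Type*} [m : MeasurableSpace Ω] (μ : Measure Ω) [IsProbabilityMeasure μ]
    {N : ℕ} (Y : Ω → ℝ) (X : Fin N → Ω → ℝ) (w : Fin N → ℝ)
    (hY : MemLp Y 2 μ) (hX : ∀ j, MemLp (X j) 2 μ)
    (hw : ∀ j, 0 ≤ w j) (hw1 : ∑ j, w j = 1)
    (hle : ∀ j, MeasurableSpace.comap (X j) Real.measurableSpace ≤ m)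
    (hcal : ∀ j, X j =ᵐ[μ] μ[Y | MeasurableSpace.comap (X j) Real.measurableSpace])
    (hnontriv : ∃ i j : Fin N, i ≠ j ∧ 0 < w i ∧ 0 < w j ∧
      0 < μ {ω | X i ω ≠ X j ω})
    (Xw : Ω → ℝ) (hXw : Xw = fun ω => ∑ j, w j * X j ω)
    (Z : Ω → ℝ) (hZ : Z = μ[Y | MeasurableSpace.comap Xw Real.measurableSpace]) :
    0 < μ {ω | Z ω ≠ Xw ω} := by
  subst hXw hZ
  by_contra! hnull
  set Xw := fun ω => ∑ j, w j * X j ω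
  have hXw_cal : Xw =ᵐ[μ] μ[Y | MeasurableSpace.comap Xw Real.measurableSpace] :=
    (measure_eq_zero_iff_ae_notMem.1 (nonpos_iff_eq_zero.1 hnull)).mono fun _ h =>
      (of_not_not h).symm
  have hXw_le : MeasurableSpace.comap Xw Real.measurableSpace ≤ m :=
    (Finset.measurable_sum _ fun j _ => (Measurable.of_comap_le (hle j)).const_mul (w j)).comap_le
  have hXw : MemLp Xw 2 μ := memLp_finsetSum _ fun j _ => (hX j).const_mul (w j)
  have gap_eq_zero : ∫ ω, ∑ j, w j * (X j ω - Xw ω) ^ 2 ∂μ = 0 := by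
    rw [integral_sum_mul_sub_weighted_sum_sq (fun j _ => hX j) hw1,
      ← integral_mul_eq_integral_sq_of_calibrated hXw_le hXw hY hXw_cal,
      integral_weighted_sum_mul fun j _ => (hX j).integrable_mul hY]
    simp only [integral_mul_eq_integral_sq_of_calibrated (hle _) (hX _) hY (hcal _), sub_self]
  obtain ⟨i, j, -, hwi, hwj, hXij⟩ := hnontriv
  exact (integral_sum_mul_sub_sq_pos (fun k _ => hX k) hXw (fun k _ => hw k)
    (Finset.mem_univ i) (Finset.mem_univ j) hwi hwj hXij).ne' gap_eq_zero
end

section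
/- Let X_w be a non-trivial weighted arithmetic mean of calibrated predictions and X_w'' := E[Y | X_w] its calibrated version. Then E[X_w] = E[X_w''] and Var(X_w) < Var(X_w''), i.e., X_w is strictly under-confident relative to its calibrated version. -/
open MeasureTheory ProbabilityTheory

/-!
Calibration `X_j = E[Y | X_j]` gives `E[X_j Y] = E[X_j²]`, so `E[X_w Y] = ∑ w_j E[X_j²]`, which
strictly exceeds `E[X_w²]` by strict convexity of the square (this is where non-triviality
enters). Since `X_w` is `σ(X_w)`-measurable, `E[X_w X_w''] = E[X_w Y]`, and then
`2 E[X_w X_w''] ≤ E[X_w²] + E[X_w''²]` forces `E[X_w²] < E[X_w''²]`. Both means equal `E[Y]`,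
so the second moments compare as the variances.
-/

section WeightedMean

variable {ι R : Type*} [Fintype ι] {w x : ι → R}

theorem sum_sum_mul_mul_sub_sq [CommRing R] (hw1 : ∑ j, w j = 1) :
    ∑ i, ∑ j, w i * w j * (x i - x j) ^ 2
      = 2 * (∑ j, w j * x j ^ 2 - (∑ j, w j * x j) ^ 2) := by
  have hrow : ∀ i, ∑ j, w i * w j * (x i - x j) ^ 2
      = w i * x i ^ 2 - 2 * (w i * x i) * ∑ j, w j * x j + w i * ∑ j, w j * x j ^ 2 := by
    intro i
    simp only [show ∀ j, w i * w j * (x i - x j) ^ 2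
        = w i * x i ^ 2 * w j - 2 * (w i * x i) * (w j * x j) + w i * (w j * x j ^ 2) from
      fun j => by ring, Finset.sum_add_distrib, Finset.sum_sub_distrib, ← Finset.mul_sum, hw1]
    ring
  simp only [hrow, Finset.sum_add_distrib, Finset.sum_sub_distrib, ← Finset.sum_mul, hw1,
    ← Finset.mul_sum]
  ring

theorem mul_mul_sub_sq_le_two_mul_sum_mul_sq_sub_sq [CommRing R] [LinearOrder R]
    [IsStrictOrderedRing R] (hw : ∀ j, 0 ≤ w j) (hw1 : ∑ j, w j = 1) (i j : ι) :
    w i * w j * (x i - x j) ^ 2 ≤ 2 * (∑ k, w k * x k ^ 2 - (∑ k, w k * x k) ^ 2) := by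
  have hterm : ∀ i j, 0 ≤ w i * w j * (x i - x j) ^ 2 := fun i j => by
    have := hw i; have := hw j; positivity
  rw [← sum_sum_mul_mul_sub_sq hw1]
  calc w i * w j * (x i - x j) ^ 2 ≤ ∑ l, w i * w l * (x i - x l) ^ 2 :=
        Finset.single_le_sum (fun l _ => hterm i l) (Finset.mem_univ j)
    _ ≤ ∑ k, ∑ l, w k * w l * (x k - x l) ^ 2 :=
        Finset.single_le_sum (f := fun k => ∑ l, w k * w l * (x k - x l) ^ 2)
          (fun k _ => Finset.sum_nonneg fun l _ => hterm k l) (Finset.mem_univ i)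

end WeightedMean

section Integrals

variable {Ω : Type*} [m0 : MeasurableSpace Ω] {μ : Measure Ω}

theorem integral_sum_mul {ι : Type*} [Fintype ι] (w : ι → ℝ) {f : ι → Ω → ℝ}
    (hf : ∀ j, Integrable (f j) μ) :
    ∫ ω, ∑ j, w j * f j ω ∂μ = ∑ j, w j * ∫ ω, f j ω ∂μ := by
  rw [integral_finsetSum _ fun j _ => (hf j).const_mul (w j)]
  simp only [integral_const_mul]

theorem integral_sub_sq_pos {f g : Ω → ℝ} (hf : MemLp f 2 μ) (hg : MemLp g 2 μ)
    (hfg : 0 < μ {ω | f ω ≠ g ω}) :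
    0 < ∫ ω, (f ω - g ω) ^ 2 ∂μ := by
  rw [integral_pos_iff_support_of_nonneg (f := fun ω => (f ω - g ω) ^ 2) (fun ω => sq_nonneg _)
    (hf.sub hg).integrable_sq]
  convert hfg using 2
  ext ω
  simp [sub_eq_zero]

theorem two_mul_integral_mul_le {f g : Ω → ℝ} (hf : MemLp f 2 μ) (hg : MemLp g 2 μ) :
    2 * ∫ ω, f ω * g ω ∂μ ≤ ∫ ω, f ω ^ 2 ∂μ + ∫ ω, g ω ^ 2 ∂μ := by
  rw [← integral_const_mul, ← integral_add hf.integrable_sq hg.integrable_sq]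
  exact integral_mono ((hf.integrable_mul hg).const_mul 2)
    (hf.integrable_sq.add hg.integrable_sq) fun ω => by linarith [two_mul_le_add_sq (f ω) (g ω)]

theorem integral_sq_sum_mul_lt {ι : Type*} [Fintype ι] {X : ι → Ω → ℝ} {w : ι → ℝ}
    (hX : ∀ j, MemLp (X j) 2 μ) (hw : ∀ j, 0 ≤ w j) (hw1 : ∑ j, w j = 1) {i j : ι}
    (hwi : 0 < w i) (hwj : 0 < w j) (hXij : 0 < μ {ω | X i ω ≠ X j ω}) :
    ∫ ω, (∑ k, w k * X k ω) ^ 2 ∂μ < ∑ k, w k * ∫ ω, X k ω ^ 2 ∂μ := by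
  have hsum : MemLp (fun ω => ∑ k, w k * X k ω) 2 μ :=
    memLp_finsetSum _ fun k _ => (hX k).const_mul (w k)
  have hgap : 0 < ∫ ω, w i * w j * (X i ω - X j ω) ^ 2 ∂μ := by
    rw [integral_const_mul]
    exact mul_pos (mul_pos hwi hwj) (integral_sub_sq_pos (hX i) (hX j) hXij)
  have hint : Integrable (fun ω => ∑ k, w k * X k ω ^ 2) μ :=
    integrable_finsetSum _ fun k _ => (hX k).integrable_sq.const_mul (w k)
  have hle : ∫ ω, w i * w j * (X i ω - X j ω) ^ 2 ∂μ
      ≤ ∫ ω, 2 * (∑ k, w k * X k ω ^ 2 - (∑ k, w k * X k ω) ^ 2) ∂μ :=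
    integral_mono (((hX i).sub (hX j)).integrable_sq.const_mul _)
      ((hint.sub hsum.integrable_sq).const_mul 2)
      fun ω => mul_mul_sub_sq_le_two_mul_sum_mul_sq_sub_sq (x := fun k => X k ω) hw hw1 i j
  have hrhs : ∫ ω, 2 * (∑ k, w k * X k ω ^ 2 - (∑ k, w k * X k ω) ^ 2) ∂μ
      = 2 * (∑ k, w k * ∫ ω, X k ω ^ 2 ∂μ - ∫ ω, (∑ k, w k * X k ω) ^ 2 ∂μ) := by
    rw [integral_const_mul, integral_sub hint hsum.integrable_sq,
      integral_sum_mul w fun k => (hX k).integrable_sq]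
  linarith

theorem integral_mul_condExp {m : MeasurableSpace Ω} (hm : m ≤ m0) [SigmaFinite (μ.trim hm)]
    {f g : Ω → ℝ} (hg : StronglyMeasurable[m] g) (hgf : Integrable (g * f) μ)
    (hf : Integrable f μ) :
    ∫ ω, g ω * μ[f | m] ω ∂μ = ∫ ω, g ω * f ω ∂μ :=
  (integral_congr_ae (condExp_mul_of_stronglyMeasurable_left hg hgf hf)).symm.trans
    (integral_condExp hm)

end Integrals

section Calibration

variable {Ω : Type*} [MeasurableSpace Ω] {μ : Measure Ω} [IsFiniteMeasure μ] {X Y : Ω → ℝ}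

def IsCalibrated (μ : Measure Ω) (Y X : Ω → ℝ) : Prop :=
  X =ᵐ[μ] μ[Y | MeasurableSpace.comap X Real.measurableSpace]

theorem IsCalibrated.integral_eq (hcal : IsCalibrated μ Y X) (hXm : Measurable X) :
    ∫ ω, X ω ∂μ = ∫ ω, Y ω ∂μ :=
  (integral_congr_ae hcal).trans (integral_condExp hXm.comap_le)

theorem IsCalibrated.integral_mul_eq_integral_sq (hcal : IsCalibrated μ Y X) (hXm : Measurable X)
    (hX : MemLp X 2 μ) (hY : MemLp Y 2 μ) :
    ∫ ω, X ω * Y ω ∂μ = ∫ ω, X ω ^ 2 ∂μ := by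
  rw [← integral_mul_condExp hXm.comap_le (comap_measurable X).stronglyMeasurable
    (hX.integrable_mul hY) (hY.integrable one_le_two)]
  exact integral_congr_ae (hcal.mono fun ω hω => by simp [← hω, sq])

end Calibration

/-- A non-trivial weighted arithmetic mean `X_w` of calibrated predictions is strictly
under-confident relative to its calibrated version `X_w'' = E[Y | X_w]`:
`E[X_w] = E[X_w'']` and `Var(X_w) < Var(X_w'')`. -/
theorem weighted_mean_underconfident
    {Ω : Type*} [m : MeasurableSpace Ω] (μ : Measure Ω) [IsProbabilityMeasure μ]
    {N : ℕ} (Y : Ω → ℝ) (X : Fin N → Ω → ℝ) (w : Fin N → ℝ)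
    (hY : MemLp Y 2 μ) (hX : ∀ j, MemLp (X j) 2 μ)
    (hw : ∀ j, 0 ≤ w j) (hw1 : ∑ j, w j = 1)
    (hle : ∀ j, MeasurableSpace.comap (X j) Real.measurableSpace ≤ m)
    (hcal : ∀ j, X j =ᵐ[μ] μ[Y | MeasurableSpace.comap (X j) Real.measurableSpace])
    (hnontriv : ∃ i j : Fin N, i ≠ j ∧ 0 < w i ∧ 0 < w j ∧
      0 < μ {ω | X i ω ≠ X j ω})
    (Xw : Ω → ℝ) (hXw : Xw = fun ω => ∑ j, w j * X j ω)
    (Xw'' : Ω → ℝ) (hXw'' : Xw'' = μ[Y | MeasurableSpace.comap Xw Real.measurableSpace]) :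
    ∫ ω, Xw ω ∂μ = ∫ ω, Xw'' ω ∂μ ∧ variance Xw μ < variance Xw'' μ := by
  obtain ⟨i, j, -, hwi, hwj, hXij⟩ := hnontriv
  have hcal : ∀ j, IsCalibrated μ Y (X j) := hcal
  have hXm : ∀ j, Measurable (X j) := fun j => measurable_iff_comap_le.mpr (hle j)
  have hXwm : Measurable Xw := hXw ▸ Finset.measurable_sum _ fun j _ => (hXm j).const_mul _
  have hXw2 : MemLp Xw 2 μ := hXw ▸ memLp_finsetSum _ fun j _ => (hX j).const_mul (w j)
  have hXw''2 : MemLp Xw'' 2 μ := hXw'' ▸ hY.condExp one_le_two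
  have hmean : ∫ ω, Xw ω ∂μ = ∫ ω, Xw'' ω ∂μ := by
    rw [hXw'', integral_condExp hXwm.comap_le, hXw,
      integral_sum_mul w fun j => (hX j).integrable one_le_two]
    simp only [fun j => (hcal j).integral_eq (hXm j), ← Finset.sum_mul, hw1, one_mul]
  have hcross : ∫ ω, Xw ω * Xw'' ω ∂μ = ∑ j, w j * ∫ ω, X j ω ^ 2 ∂μ := by
    rw [hXw'', integral_mul_condExp hXwm.comap_le (comap_measurable Xw).stronglyMeasurable
      (hXw2.integrable_mul hY) (hY.integrable one_le_two), hXw]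
    simp only [Finset.sum_mul, mul_assoc]
    rw [integral_sum_mul w (f := fun j ω => X j ω * Y ω) fun j => (hX j).integrable_mul hY]
    simp only [fun j => (hcal j).integral_mul_eq_integral_sq (hXm j) (hX j) hY]
  have hjensen : ∫ ω, Xw ω ^ 2 ∂μ < ∑ j, w j * ∫ ω, X j ω ^ 2 ∂μ :=
    hXw ▸ integral_sq_sum_mul_lt hX hw hw1 hwi hwj hXij
  have hamgm := two_mul_integral_mul_le hXw2 hXw''2
  refine ⟨hmean, ?_⟩
  rw [variance_eq_sub hXw2, variance_eq_sub hXw''2]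
  simp only [Pi.pow_apply, hmean]
  linarith
end

section
/- A non-trivial weighted arithmetic mean X_w of calibrated predictions satisfies Var(X_w) < max(Var(X₁), ..., Var(X_N)), hence X_w is not extremizing. -/
/-!
The variance of the weighted mean is `∑ᵢⱼ wᵢ wⱼ Cov(Xᵢ, Xⱼ)`, and each covariance is at most
`M = maxₘ Var(Xₘ)` because `0 ≤ Var(Xᵢ - Xⱼ) = Var Xᵢ - 2 Cov(Xᵢ, Xⱼ) + Var Xⱼ`. Equality would
make `Xᵢ - Xⱼ` a.s. equal to its mean, which is `0` since calibration gives every prediction the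
mean of `Y`. So the disagreeing pair has covariance `< M`, and the weighted average of the
covariances falls strictly below `M`.
-/

open MeasureTheory ProbabilityTheory Finset

section

variable {Ω : Type*} {m : MeasurableSpace Ω} {μ : Measure Ω}

lemma integral_eq_of_ae_eq_condExp [IsFiniteMeasure μ] {m' : MeasurableSpace Ω} (hm' : m' ≤ m)
    {X Y : Ω → ℝ} (hXY : X =ᵐ[μ] μ[Y | m']) : μ[X] = μ[Y] := by
  rw [integral_congr_ae hXY, integral_condExp hm']

lemma covariance_le_of_variance_le [IsFiniteMeasure μ] {X Z : Ω → ℝ} {M : ℝ}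
    (hX : MemLp X 2 μ) (hZ : MemLp Z 2 μ) (hXM : Var[X; μ] ≤ M) (hZM : Var[Z; μ] ≤ M) :
    cov[X, Z; μ] ≤ M := by
  have := variance_sub hX hZ ▸ variance_nonneg (X - Z) μ
  linarith

lemma covariance_lt_of_variance_le [IsFiniteMeasure μ] {X Z : Ω → ℝ} {M : ℝ}
    (hX : MemLp X 2 μ) (hZ : MemLp Z 2 μ) (hXM : Var[X; μ] ≤ M) (hZM : Var[Z; μ] ≤ M)
    (hmean : μ[X] = μ[Z]) (hXZ : ¬X =ᵐ[μ] Z) :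
    cov[X, Z; μ] < M := by
  refine (covariance_le_of_variance_le hX hZ hXM hZM).lt_of_ne fun hcov ↦ hXZ ?_
  have hvar : Var[X - Z; μ] = 0 :=
    le_antisymm (by linarith [variance_sub hX hZ]) (variance_nonneg _ _)
  have hmean_sub : μ[X - Z] = 0 := by
    rw [integral_sub' (hX.integrable one_le_two) (hZ.integrable one_le_two), hmean, sub_self]
  filter_upwards [ae_eq_integral_of_variance_eq_zero (hX.sub hZ) hvar] with ω hω
  rw [hmean_sub, Pi.sub_apply, sub_eq_zero] at hω
  exact hω

lemma variance_weighted_sum [IsFiniteMeasure μ] {ι : Type*} [Fintype ι] {X : ι → Ω → ℝ}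
    (hX : ∀ i, MemLp (X i) 2 μ) (w : ι → ℝ) :
    Var[fun ω ↦ ∑ i, w i * X i ω; μ] = ∑ i, ∑ j, w i * w j * cov[X i, X j; μ] := by
  rw [variance_fun_sum fun i ↦ (hX i).const_mul (w i)]
  simp only [covariance_const_mul_left, covariance_const_mul_right]
  exact sum_congr rfl fun i _ ↦ sum_congr rfl fun j _ ↦ by ring

lemma sum_sum_mul_mul_lt_of_le_of_lt {ι : Type*} [Fintype ι] {w : ι → ℝ} {c : ι → ι → ℝ}
    {M : ℝ} (hw : ∀ i, 0 ≤ w i) (hw1 : ∑ i, w i = 1) (hc : ∀ i j, c i j ≤ M)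
    {i₀ j₀ : ι} (hi₀ : 0 < w i₀) (hj₀ : 0 < w j₀) (hc₀ : c i₀ j₀ < M) :
    ∑ i, ∑ j, w i * w j * c i j < M := by
  have hle : ∀ i j, w i * w j * c i j ≤ w i * w j * M := fun i j ↦
    mul_le_mul_of_nonneg_left (hc i j) (mul_nonneg (hw i) (hw j))
  calc ∑ i, ∑ j, w i * w j * c i j
      < ∑ i, ∑ j, w i * w j * M :=
        sum_lt_sum (fun i _ ↦ sum_le_sum fun j _ ↦ hle i j)
          ⟨i₀, mem_univ _, sum_lt_sum (fun j _ ↦ hle i₀ j)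
            ⟨j₀, mem_univ _, mul_lt_mul_of_pos_left hc₀ (mul_pos hi₀ hj₀)⟩⟩
    _ = (∑ i, w i) * (∑ j, w j) * M := by rw [sum_mul_sum, sum_mul]; simp only [sum_mul]
    _ = M := by rw [hw1, one_mul, one_mul]

end

theorem weighted_mean_variance_lt_max_general
    {Ω : Type*} [m : MeasurableSpace Ω] (μ : Measure Ω) [IsProbabilityMeasure μ]
    {N : ℕ} (Y : Ω → ℝ) (X : Fin N → Ω → ℝ) (w : Fin N → ℝ)
    (hX : ∀ j, MemLp (X j) 2 μ)
    (hw : ∀ j, 0 ≤ w j) (hw1 : ∑ j, w j = 1)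
    (hle : ∀ j, MeasurableSpace.comap (X j) Real.measurableSpace ≤ m)
    (hcal : ∀ j, X j =ᵐ[μ] μ[Y | MeasurableSpace.comap (X j) Real.measurableSpace])
    (hnontriv : ∃ i j : Fin N, i ≠ j ∧ 0 < w i ∧ 0 < w j ∧
      0 < μ {ω | X i ω ≠ X j ω})
    (hne : (Finset.univ : Finset (Fin N)).Nonempty) :
    variance (fun ω => ∑ j, w j * X j ω) μ
      < Finset.univ.sup' hne (fun j => variance (X j) μ) := by
  obtain ⟨i₀, j₀, -, hi₀, hj₀, hdis⟩ := hnontriv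
  have hmean : ∀ j, μ[X j] = μ[Y] := fun j ↦ integral_eq_of_ae_eq_condExp (hle j) (hcal j)
  have hvar : ∀ j, Var[X j; μ] ≤ univ.sup' hne fun j ↦ Var[X j; μ] := fun j ↦
    le_sup' (fun j ↦ Var[X j; μ]) (mem_univ j)
  rw [variance_weighted_sum hX]
  refine sum_sum_mul_mul_lt_of_le_of_lt hw hw1
    (fun i j ↦ covariance_le_of_variance_le (hX i) (hX j) (hvar i) (hvar j)) hi₀ hj₀ ?_
  exact covariance_lt_of_variance_le (hX i₀) (hX j₀) (hvar i₀) (hvar j₀)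
    ((hmean i₀).trans (hmean j₀).symm) (ae_iff.not.mpr hdis.ne')

/-- A non-trivial weighted arithmetic mean `X_w` of calibrated predictions satisfies
`Var(X_w) < max(Var(X₁), ..., Var(X_N))`; hence `X_w` is not extremizing. -/
theorem weighted_mean_variance_lt_max
    {Ω : Type*} [m : MeasurableSpace Ω] (μ : Measure Ω) [IsProbabilityMeasure μ]
    {N : ℕ} (Y : Ω → ℝ) (X : Fin N → Ω → ℝ) (w : Fin N → ℝ)
    (hY : MemLp Y 2 μ) (hX : ∀ j, MemLp (X j) 2 μ)
    (hw : ∀ j, 0 ≤ w j) (hw1 : ∑ j, w j = 1)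
    (hle : ∀ j, MeasurableSpace.comap (X j) Real.measurableSpace ≤ m)
    (hcal : ∀ j, X j =ᵐ[μ] μ[Y | MeasurableSpace.comap (X j) Real.measurableSpace])
    (hnontriv : ∃ i j : Fin N, i ≠ j ∧ 0 < w i ∧ 0 < w j ∧
      0 < μ {ω | X i ω ≠ X j ω})
    (hne : (Finset.univ : Finset (Fin N)).Nonempty) :
    variance (fun ω => ∑ j, w j * X j ω) μ
      < Finset.univ.sup' hne (fun j => variance (X j) μ) :=
  weighted_mean_variance_lt_max_general (m := m) μ Y X w hX hw hw1 hle hcal hnontriv hne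
end

section
/- In the two-expert linear model with independent components: if X₁ = X_(1) + X_(1,2) and X₂ = X_(2) + X_(1,2) where X_(1), X_(2), X_(1,2) are independent, mean-zero, with Var(X_(1)), Var(X_(2)) > 0 and Var(X_(1,2)) ≥ 0, and δⱼ = Var(Xⱼ), ρ = Cov(X₁,X₂) = Var(X_(1,2)), then the least-squares coefficients βⱼ = (δ₁δ₂ − ρδ_i)/(δ₁δ₂ − ρ²) (i ≠ j) satisfy β₁ > 0, β₂ > 0, and β₁ + β₂ > 1. -/
open MeasureTheory ProbabilityTheory

/-- The covariance of two real random variables. -/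
noncomputable def cov {Ω : Type*} {mΩ : MeasurableSpace Ω} (X Y : Ω → ℝ) (μ : Measure Ω) : ℝ :=
  ∫ ω, (X ω - ∫ x, X x ∂μ) * (Y ω - ∫ x, Y x ∂μ) ∂μ

/-!
The shared component `X_(1,2)` is the only source of correlation, so `ρ = Var(X_(1,2))` and
`δⱼ = Var(X_(j)) + ρ`; in particular `0 ≤ ρ < min(δ₁, δ₂)`. Under that constraint the
denominator `δ₁δ₂ - ρ²` and the numerators `δᵢ(δⱼ - ρ)` are positive, and
`β₁ + β₂ - 1 = (δ₁ - ρ)(δ₂ - ρ) / (δ₁δ₂ - ρ²) > 0`.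
-/

theorem cov_eq_covariance {Ω : Type*} {mΩ : MeasurableSpace Ω} (X Y : Ω → ℝ) (μ : Measure Ω) :
    cov X Y μ = covariance X Y μ :=
  rfl

theorem covariance_add_add_of_indepFun {Ω : Type*} {mΩ : MeasurableSpace Ω} {μ : Measure Ω}
    [IsFiniteMeasure μ] {X Y Z : Ω → ℝ} (hX : MemLp X 2 μ) (hY : MemLp Y 2 μ)
    (hZ : MemLp Z 2 μ) (hXY : X ⟂ᵢ[μ] Y) (hXZ : X ⟂ᵢ[μ] Z) (hZY : Z ⟂ᵢ[μ] Y) :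
    covariance (X + Z) (Y + Z) μ = variance Z μ := by
  rw [covariance_add_left hX hZ (hY.add hZ), covariance_add_right hX hY hZ,
    covariance_add_right hZ hY hZ, hXY.covariance_eq_zero hX hY, hXZ.covariance_eq_zero hX hZ,
    hZY.covariance_eq_zero hZ hY, covariance_self hZ.aemeasurable]
  ring

/-- The least-squares weight of the expert with variance `δ₁`; swapping `δ₁` and `δ₂` gives the
weight of the other one. -/
noncomputable def leastSquaresCoeff (δ₁ δ₂ ρ : ℝ) : ℝ :=
  (δ₁ * δ₂ - ρ * δ₂) / (δ₁ * δ₂ - ρ ^ 2)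

section LeastSquaresCoeff

variable {δ₁ δ₂ ρ : ℝ}

theorem sq_lt_mul_of_nonneg_of_lt (hρ : 0 ≤ ρ) (h₁ : ρ < δ₁) (h₂ : ρ < δ₂) :
    ρ ^ 2 < δ₁ * δ₂ := by
  nlinarith

theorem leastSquaresCoeff_pos (hρ : 0 ≤ ρ) (h₁ : ρ < δ₁) (h₂ : ρ < δ₂) :
    0 < leastSquaresCoeff δ₁ δ₂ ρ := by
  refine div_pos ?_ (sub_pos.2 (sq_lt_mul_of_nonneg_of_lt hρ h₁ h₂))
  nlinarith

theorem one_lt_leastSquaresCoeff_add_leastSquaresCoeff (hρ : 0 ≤ ρ) (h₁ : ρ < δ₁)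
    (h₂ : ρ < δ₂) : 1 < leastSquaresCoeff δ₁ δ₂ ρ + leastSquaresCoeff δ₂ δ₁ ρ := by
  have hden : 0 < δ₁ * δ₂ - ρ ^ 2 := sub_pos.2 (sq_lt_mul_of_nonneg_of_lt hρ h₁ h₂)
  rw [leastSquaresCoeff, leastSquaresCoeff, mul_comm δ₂ δ₁, ← add_div, one_lt_div hden]
  nlinarith [mul_pos (sub_pos.2 h₁) (sub_pos.2 h₂)]

end LeastSquaresCoeff

theorem two_expert_coefficients_general
    {Ω : Type*} [m : MeasurableSpace Ω] (μ : Measure Ω) [IsProbabilityMeasure μ]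
    (Z : Fin 3 → Ω → ℝ)  -- Z 0 = X_(1), Z 1 = X_(2), Z 2 = X_(1,2)
    (hZ : ∀ i, MemLp (Z i) 2 μ)
    (hindep : iIndepFun Z μ)
    (hvar0 : 0 < variance (Z 0) μ) (hvar1 : 0 < variance (Z 1) μ)
    (X₁ X₂ : Ω → ℝ)
    (hX₁ : X₁ = fun ω => Z 0 ω + Z 2 ω) (hX₂ : X₂ = fun ω => Z 1 ω + Z 2 ω)
    (δ₁ δ₂ ρ β₁ β₂ : ℝ)
    (hδ₁ : δ₁ = variance X₁ μ) (hδ₂ : δ₂ = variance X₂ μ)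
    (hρ : ρ = cov X₁ X₂ μ)
    (hβ₁ : β₁ = (δ₁ * δ₂ - ρ * δ₂) / (δ₁ * δ₂ - ρ ^ 2))
    (hβ₂ : β₂ = (δ₁ * δ₂ - ρ * δ₁) / (δ₁ * δ₂ - ρ ^ 2)) :
    ρ = variance (Z 2) μ ∧ 0 < β₁ ∧ 0 < β₂ ∧ 1 < β₁ + β₂ := by
  have hX₁' : X₁ = Z 0 + Z 2 := hX₁
  have hX₂' : X₂ = Z 1 + Z 2 := hX₂
  have hρZ : ρ = variance (Z 2) μ := by
    rw [hρ, cov_eq_covariance, hX₁', hX₂']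
    exact covariance_add_add_of_indepFun (hZ 0) (hZ 1) (hZ 2)
      (hindep.indepFun (by decide)) (hindep.indepFun (by decide)) (hindep.indepFun (by decide))
  have hδ₁Z : δ₁ = variance (Z 0) μ + ρ := by
    rw [hδ₁, hX₁', hρZ, IndepFun.variance_add (hZ 0) (hZ 2) (hindep.indepFun (by decide))]
  have hδ₂Z : δ₂ = variance (Z 1) μ + ρ := by
    rw [hδ₂, hX₂', hρZ, IndepFun.variance_add (hZ 1) (hZ 2) (hindep.indepFun (by decide))]
  have hρ_nonneg : 0 ≤ ρ := hρZ ▸ variance_nonneg _ _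
  have h₁ : ρ < δ₁ := by linarith
  have h₂ : ρ < δ₂ := by linarith
  have hβ₁' : β₁ = leastSquaresCoeff δ₁ δ₂ ρ := hβ₁
  have hβ₂' : β₂ = leastSquaresCoeff δ₂ δ₁ ρ := by rw [hβ₂, leastSquaresCoeff, mul_comm δ₂ δ₁]
  rw [hβ₁', hβ₂']
  exact ⟨hρZ, leastSquaresCoeff_pos hρ_nonneg h₁ h₂, leastSquaresCoeff_pos hρ_nonneg h₂ h₁,
    one_lt_leastSquaresCoeff_add_leastSquaresCoeff hρ_nonneg h₁ h₂⟩

/-- Two-expert linear model with independent components: if `X₁ = X_(1) + X_(1,2)` and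
`X₂ = X_(2) + X_(1,2)` with `X_(1), X_(2), X_(1,2)` independent, mean zero,
`Var(X_(1)), Var(X_(2)) > 0`, then `ρ = Cov(X₁, X₂) = Var(X_(1,2))` and the
least-squares coefficients `βⱼ = (δ₁δ₂ − ρδᵢ)/(δ₁δ₂ − ρ²)` satisfy
`β₁ > 0`, `β₂ > 0`, and `β₁ + β₂ > 1`. -/
theorem two_expert_coefficients
    {Ω : Type*} [m : MeasurableSpace Ω] (μ : Measure Ω) [IsProbabilityMeasure μ]
    (Z : Fin 3 → Ω → ℝ)  -- Z 0 = X_(1), Z 1 = X_(2), Z 2 = X_(1,2)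
    (hmeas : ∀ i, Measurable (Z i))
    (hZ : ∀ i, MemLp (Z i) 2 μ)
    (hindep : iIndepFun Z μ)
    (hmean : ∀ i, ∫ ω, Z i ω ∂μ = 0)
    (hvar0 : 0 < variance (Z 0) μ) (hvar1 : 0 < variance (Z 1) μ)
    (X₁ X₂ : Ω → ℝ)
    (hX₁ : X₁ = fun ω => Z 0 ω + Z 2 ω) (hX₂ : X₂ = fun ω => Z 1 ω + Z 2 ω)
    (δ₁ δ₂ ρ β₁ β₂ : ℝ)
    (hδ₁ : δ₁ = variance X₁ μ) (hδ₂ : δ₂ = variance X₂ μ)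
    (hρ : ρ = cov X₁ X₂ μ)
    (hβ₁ : β₁ = (δ₁ * δ₂ - ρ * δ₂) / (δ₁ * δ₂ - ρ ^ 2))
    (hβ₂ : β₂ = (δ₁ * δ₂ - ρ * δ₁) / (δ₁ * δ₂ - ρ ^ 2)) :
    ρ = variance (Z 2) μ ∧ 0 < β₁ ∧ 0 < β₂ ∧ 1 < β₁ + β₂ :=
  two_expert_coefficients_general (m := m) μ Z hZ hindep hvar0 hvar1 X₁ X₂ hX₁ hX₂ δ₁ δ₂ ρ β₁ β₂ hδ₁
    hδ₂ hρ hβ₁ hβ₂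
end
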